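/- arXiv:2207.11419 — 5 statements merged into one kernel-verified Lean document; each statement's English description precedes it below -/
import Mathlib

section
/- Let φ ∈ L^∞([0,1]) and α ∈ [0,1], and let 1 < p < ∞. If ‖φ‖_∞ ≤ 1 or if the Lebesgue measure of {x ∈ [0,1] : φ(x) = 0} is positive, then the weighted translation operator T_{φ,α} on L^p([0,1]) is not hypercyclic. -/
open MeasureTheory Set Filter Topology Polynomial
open scoped ENNReal NNReal

/-- Lebesgue measure restricted to `[0,1]`. -/
noncomputable def μ01 : Measure ℝ := volume.restrict (Set.Icc 0 1)

/-- `T` is the Bishop operator `T_α` on `L^p([0,1])`, i.e.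
`(T f)(x) = x · f({x + α})` for a.e. `x ∈ [0,1]`, where `{·}` is the fractional part. -/
def IsBishopOp (p : ℝ≥0∞) [Fact (1 ≤ p)] (α : ℝ)
    (T : Lp ℂ p μ01 →L[ℂ] Lp ℂ p μ01) : Prop :=
  ∀ f : Lp ℂ p μ01, ∀ᵐ x ∂μ01, (T f) x = (x : ℂ) * f (Int.fract (x + α))

/-- `T` is the weighted translation operator `T_{φ,α}` on `L^p([0,1])`, i.e.
`(T f)(x) = φ(x) · f({x + α})` for a.e. `x ∈ [0,1]`. -/
def IsWTOp (p : ℝ≥0∞) [Fact (1 ≤ p)] (φ : ℝ → ℂ) (α : ℝ)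
    (T : Lp ℂ p μ01 →L[ℂ] Lp ℂ p μ01) : Prop :=
  ∀ f : Lp ℂ p μ01, ∀ᵐ x ∂μ01, (T f) x = φ x * f (Int.fract (x + α))

/-!
If `‖φ‖_∞ ≤ 1`, then `T_{φ,α}` is a contraction, since `x ↦ {x + α}` preserves Lebesgue measure
on `[0,1]`; every orbit of a contraction is bounded, hence not dense. If `φ` vanishes on a set `Z`
of positive measure, then so does every function in the range of `T_{φ,α}`, so the range is not
dense; but a hypercyclic operator has dense range, because its orbit with the starting point
removed is still dense and lies in the range.
-/

def IsHypercyclic {R M : Type*} [Semiring R] [TopologicalSpace M] [AddCommMonoid M] [Module R M]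
    (T : M →L[R] M) : Prop :=
  ∃ x, Dense (Set.range fun n : ℕ => (T ^ n) x)

namespace IsHypercyclic

variable {𝕜 E F : Type*} [NontriviallyNormedField 𝕜] [NormedAddCommGroup E] [NormedSpace 𝕜 E]
  [NormedAddCommGroup F] [NormedSpace 𝕜 F] {T : E →L[𝕜] E}

theorem one_lt_norm [Nontrivial E] (hT : IsHypercyclic T) : 1 < ‖T‖ := by
  obtain ⟨x, hx⟩ := hT
  by_contra! hle
  have hbdd : Bornology.IsBounded (Set.range fun n : ℕ => (T ^ n) x) := by
    refine (Metric.isBounded_closedBall (x := 0) (r := ‖x‖)).subset ?_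
    rintro _ ⟨n, rfl⟩
    rw [mem_closedBall_zero_iff]
    calc ‖(T ^ n) x‖ ≤ ‖T ^ n‖ * ‖x‖ := (T ^ n).le_opNorm x
      _ ≤ 1 * ‖x‖ := by gcongr; exact (norm_pow_le T n).trans (pow_le_one₀ (norm_nonneg T) hle)
      _ = ‖x‖ := one_mul _
  exact NormedSpace.unbounded_univ 𝕜 E (hx.closure_eq ▸ hbdd.closure)

theorem denseRange [Nontrivial E] (hT : IsHypercyclic T) : DenseRange T := by
  obtain ⟨x, hx⟩ := hT
  have := Module.punctured_nhds_neBot 𝕜 E x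
  refine (hx.sdiff_singleton x).mono ?_
  rintro _ ⟨⟨n, rfl⟩, hn⟩
  cases n with
  | zero => exact absurd rfl hn
  | succ n => exact ⟨(T ^ n) x, by simp only [pow_succ', mul_apply_eq_comp]⟩

theorem eq_zero_of_comp_eq_zero (hT : IsHypercyclic T) {L : E →L[𝕜] F} (hLT : L ∘L T = 0) :
    L = 0 := by
  nontriviality E
  ext x
  exact congrFun (hT.denseRange.equalizer L.continuous continuous_const
    (funext fun y => congrArg (· y) hLT)) x

end IsHypercyclic

namespace MeasureTheory

variable {X F : Type*} [MeasurableSpace X] {μ : Measure X} [NormedAddCommGroup F] {p : ℝ≥0∞}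

theorem Lp.ne_zero_of_ae_eq_const [NeZero μ] {f : Lp F p μ} {c : F} (hc : c ≠ 0)
    (hf : f =ᵐ[μ] fun _ => c) : f ≠ 0 := by
  rintro rfl
  obtain ⟨x, hx⟩ := ((Lp.coeFn_zero F p μ).symm.trans hf).exists
  exact hc hx.symm

instance Lp.nontrivial [IsFiniteMeasure μ] [NeZero μ] [Nontrivial F] : Nontrivial (Lp F p μ) :=
  let ⟨_, hc⟩ := exists_ne (0 : F)
  nontrivial_of_ne _ 0 (Lp.ne_zero_of_ae_eq_const hc (Lp.coeFn_const p μ _))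

theorem LpToLpRestrictCLM_ne_zero (𝕜 : Type*) [NormedRing 𝕜] [Module 𝕜 F] [IsBoundedSMul 𝕜 F]
    [Fact (1 ≤ p)] [IsFiniteMeasure μ] [Nontrivial F] {s : Set X} (hs : μ s ≠ 0) :
    LpToLpRestrictCLM X F 𝕜 μ p s ≠ 0 := by
  have : NeZero (μ.restrict s) := ⟨by rwa [Ne, Measure.restrict_eq_zero]⟩
  obtain ⟨c, hc⟩ := exists_ne (0 : F)
  intro h
  refine Lp.ne_zero_of_ae_eq_const hc ((LpToLpRestrictCLM_coeFn 𝕜 s (Lp.const p μ c)).trans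
    (ae_restrict_of_ae (Lp.coeFn_const p μ c))) ?_
  rw [h, zero_apply]

end MeasureTheory

instance : IsProbabilityMeasure μ01 :=
  ⟨by simp [μ01, Real.volume_Icc]⟩

open AddCircle in
-- Through the circle `ℝ/ℤ`, `x ↦ {x + α}` is a rotation, which preserves Haar measure.
lemma measurePreserving_fract_add (α : ℝ) :
    MeasurePreserving (fun x => Int.fract (x + α)) μ01 μ01 := by
  let mk : ℝ → UnitAddCircle := (↑)
  let fr : UnitAddCircle → ℝ := fun y => (equivIco 1 0 y : ℝ)
  have hfr : ∀ x, fr (mk x) = Int.fract x := fun x => by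
    simp [fr, mk, equivIco, QuotientAddGroup.equivIcoMod_coe, toIcoMod_zero_one]
  have hmk : MeasurePreserving mk μ01 volume := by
    rw [μ01, ← Measure.restrict_congr_set Ioc_ae_eq_Icc]
    simpa using UnitAddCircle.measurePreserving_mk 0
  have hfract : ∀ᵐ x ∂μ01, Int.fract x = x := by
    rw [μ01, ← Measure.restrict_congr_set Ico_ae_eq_Icc]
    filter_upwards [ae_restrict_mem measurableSet_Ico] with x hx
    exact Int.fract_eq_self.mpr hx
  have hfr_meas : Measurable fr :=
    measurable_subtype_coe.comp (measurableEquivIco 1 0).measurable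
  have hfr_mp : MeasurePreserving fr volume μ01 := by
    refine ⟨hfr_meas, ?_⟩
    rw [← hmk.map_eq, Measure.map_map hfr_meas hmk.measurable,
      Measure.map_congr (f := fr ∘ mk) (g := id) (hfract.mono fun x hx => (hfr x).trans hx),
      Measure.map_id]
  have hrot : (fun x => Int.fract (x + α)) = fr ∘ (· + mk α) ∘ mk := by
    ext x; simp [← hfr, mk]
  rw [hrot]
  exact hfr_mp.comp ((measurePreserving_add_right volume (mk α)).comp hmk)

namespace IsWTOp

variable {p : ℝ≥0∞} [Fact (1 ≤ p)] {φ : ℝ → ℂ} {α : ℝ} {T : Lp ℂ p μ01 →L[ℂ] Lp ℂ p μ01}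

theorem opNorm_le (hT : IsWTOp p φ α T) (hφ : MemLp φ ∞ μ01) :
    ‖T‖ ≤ (eLpNorm φ ∞ μ01).toReal := by
  refine T.opNorm_le_bound ENNReal.toReal_nonneg fun g => ?_
  have hshift : eLpNorm (g ∘ fun x => Int.fract (x + α)) p μ01 = eLpNorm g p μ01 :=
    eLpNorm_comp_measurePreserving (Lp.aestronglyMeasurable g) (measurePreserving_fract_add α)
  have hle : eLpNorm (T g) p μ01 ≤ eLpNorm φ ∞ μ01 * eLpNorm g p μ01 := by
    rw [eLpNorm_congr_ae (hT g), ← hshift]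
    exact eLpNorm_smul_le_eLpNorm_top_mul_eLpNorm p
      ((Lp.aestronglyMeasurable g).comp_measurePreserving (measurePreserving_fract_add α)) φ
  rw [Lp.norm_def, Lp.norm_def, ← ENNReal.toReal_mul]
  exact ENNReal.toReal_mono (ENNReal.mul_ne_top hφ.eLpNorm_ne_top (Lp.eLpNorm_ne_top g)) hle

theorem LpToLpRestrictCLM_comp_eq_zero (hT : IsWTOp p φ α T)
    (hφ : NullMeasurableSet {x | φ x = 0} μ01) :
    LpToLpRestrictCLM ℝ ℂ ℂ μ01 p {x | φ x = 0} ∘L T = 0 := by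
  ext1 g
  change _ = (0 : Lp ℂ p _)
  refine Lp.ext ((LpToLpRestrictCLM_coeFn ℂ _ (T g)).trans ?_)
  filter_upwards [ae_restrict_of_ae (hT g), ae_restrict_mem₀ hφ,
    Lp.coeFn_zero ℂ p (μ01.restrict {x | φ x = 0})] with x hTx hx h0
  rw [hTx, h0, show φ x = 0 from hx, zero_mul, Pi.zero_apply]

end IsWTOp

theorem weighted_translation_not_hypercyclic_general (p : ℝ≥0∞) [Fact (1 ≤ p)]
    (φ : ℝ → ℂ) (hφ : MemLp φ ⊤ μ01)
    (α : ℝ)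
    (hsmall : eLpNorm φ ⊤ μ01 ≤ 1 ∨ 0 < μ01 {x | φ x = 0})
    (T : Lp ℂ p μ01 →L[ℂ] Lp ℂ p μ01) (hT : IsWTOp p φ α T) :
    ¬ ∃ f : Lp ℂ p μ01, Dense (Set.range fun n : ℕ => (T ^ n) f) := by
  rintro (hyp : IsHypercyclic T)
  rcases hsmall with hnorm | hzero
  · have hT1 : ‖T‖ ≤ 1 := (hT.opNorm_le hφ).trans
      (ENNReal.toReal_le_of_le_ofReal zero_le_one (hnorm.trans ENNReal.ofReal_one.ge))
    exact hT1.not_gt hyp.one_lt_norm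
  · have hnull : NullMeasurableSet {x | φ x = 0} μ01 :=
      hφ.aestronglyMeasurable.nullMeasurableSet_eq_fun aestronglyMeasurable_const
    exact LpToLpRestrictCLM_ne_zero ℂ hzero.ne'
      (hyp.eq_zero_of_comp_eq_zero (hT.LpToLpRestrictCLM_comp_eq_zero hnull))

/-- If `φ ∈ L^∞([0,1])` with `‖φ‖_∞ ≤ 1`, or the set `{φ = 0}` has positive
Lebesgue measure, then for every `α ∈ [0,1]` and `1 < p < ∞` the weighted translation
operator `T_{φ,α}` on `L^p([0,1])` is not hypercyclic. -/
theorem weighted_translation_not_hypercyclic (p : ℝ≥0∞) [Fact (1 ≤ p)]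
    (hp : 1 < p) (hp' : p ≠ ∞)
    (φ : ℝ → ℂ) (hφ : MemLp φ ⊤ μ01)
    (α : ℝ) (hα : α ∈ Set.Icc (0 : ℝ) 1)
    (hsmall : eLpNorm φ ⊤ μ01 ≤ 1 ∨ 0 < μ01 {x | φ x = 0})
    (T : Lp ℂ p μ01 →L[ℂ] Lp ℂ p μ01) (hT : IsWTOp p φ α T) :
    ¬ ∃ f : Lp ℂ p μ01, Dense (Set.range fun n : ℕ => (T ^ n) f) :=
  weighted_translation_not_hypercyclic_general p φ hφ α hsmall T hT
end

section
/- Let φ ∈ L^∞([0,1]) be such that the Lebesgue measure of {x ∈ [0,1] : φ(x) = 0} is positive, let α ∈ [0,1] and let 1 < p < ∞. Then the weighted translation operator T_{φ,α} on L^p([0,1]) is not supercyclic. -/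
open MeasureTheory Set Filter Topology Polynomial
open scoped ENNReal NNReal

/-!
Every `T f` vanishes a.e. on `Z = {φ = 0}`, so restriction to `Z`, a nonzero continuous linear
map, kills the range of `T`, which is therefore not dense. The projective orbit of any `f` lies in
`ℂ ∙ f ∪ closure (range T)`, a union of two closed subspaces; were the orbit dense, one of them
would be all of `L^p`, impossible since `range T` is not dense and `L^p([0,1])` has dimension at
least two.
-/

theorem Subspace.eq_top_or_eq_top_of_union_eq_univ {k E : Type*} [DivisionRing k] [Infinite k]
    [AddCommGroup E] [Module k E] {U W : Subspace k E} (h : (U : Set E) ∪ W = univ) :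
    U = ⊤ ∨ W = ⊤ := by
  classical
  have := Subspace.top_mem_of_biUnion_eq_univ (s := {U, W}) (by simpa using h)
  simpa [eq_comm] using this

theorem ContinuousLinearMap.not_supercyclic_of_not_denseRange {𝕜 E : Type*}
    [NontriviallyNormedField 𝕜] [CompleteSpace 𝕜] [AddCommGroup E] [TopologicalSpace E]
    [IsTopologicalAddGroup E] [Module 𝕜 E] [ContinuousSMul 𝕜 E] [T2Space E]
    (hE : 1 < Module.rank 𝕜 E) {T : E →L[𝕜] E} (hT : ¬ DenseRange T) :
    ¬ ∃ f : E, Dense {g : E | ∃ (c : 𝕜) (n : ℕ), c • (T ^ n) f = g} := by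
  rintro ⟨f, hf⟩
  set V := (LinearMap.range (T : E →ₗ[𝕜] E)).topologicalClosure
  have horbit : {g : E | ∃ (c : 𝕜) (n : ℕ), c • (T ^ n) f = g} ⊆ ((𝕜 ∙ f) : Set E) ∪ V := by
    rintro _ ⟨c, _ | n, rfl⟩
    · exact Or.inl (Submodule.smul_mem _ c (Submodule.mem_span_singleton_self f))
    · refine Or.inr (V.smul_mem c (Submodule.le_topologicalClosure _ ?_))
      exact ⟨(T ^ n) f, by rw [pow_succ']; rfl⟩
  have hcover : ((𝕜 ∙ f) : Set E) ∪ V = univ :=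
    eq_univ_of_univ_subset <| hf.closure_eq ▸ closure_minimal horbit
      ((Submodule.closed_of_finiteDimensional _).union
        (LinearMap.range _).isClosed_topologicalClosure)
  rcases Subspace.eq_top_or_eq_top_of_union_eq_univ hcover with hspan | hV
  · have := rank_span_le (R := 𝕜) ({f} : Set E)
    rw [hspan, rank_top, Cardinal.mk_singleton] at this
    exact hE.not_ge this
  · exact hT (Submodule.dense_iff_topologicalClosure_eq_top.mpr hV)

namespace MeasureTheory.Lp

variable {α E 𝕜 : Type*} [MeasurableSpace α] {μ : Measure α} {p : ℝ≥0∞}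
  [NormedAddCommGroup E]

theorem not_denseRange_of_ae_restrict_eq_zero [NormedRing 𝕜] [Module 𝕜 E] [IsBoundedSMul 𝕜 E]
    [Fact (1 ≤ p)] [IsFiniteMeasure μ] [Nontrivial E] {s : Set α} (hs : μ s ≠ 0)
    {T : Lp E p μ →L[𝕜] Lp E p μ} (hT : ∀ f, ∀ᵐ x ∂μ.restrict s, T f x = 0) :
    ¬ DenseRange T := by
  intro hdense
  set R := LpToLpRestrictCLM α E 𝕜 μ p s
  have hRT : ⇑R ∘ ⇑T = (fun _ ↦ 0) ∘ ⇑T := funext fun f ↦ eq_zero_iff_ae_eq_zero.mpr <|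
    (LpToLpRestrictCLM_coeFn 𝕜 s (T f)).trans (hT f)
  have hR : ⇑R = fun _ ↦ 0 := hdense.equalizer R.continuous continuous_const hRT
  obtain ⟨c, hc⟩ := exists_ne (0 : E)
  have hconst : ∀ᵐ x ∂μ.restrict s, c = 0 := by
    filter_upwards [ae_restrict_of_ae (coeFn_const (p := p) (μ := μ) c),
      LpToLpRestrictCLM_coeFn 𝕜 s (Lp.const p μ c), coeFn_zero E p (μ.restrict s)]
      with x hconst hR' hzero
    rw [congrFun hR] at hR'
    exact hconst.symm.trans (hR'.symm.trans hzero)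
  have := ae_restrict_neBot.mpr hs
  obtain ⟨_, hc0⟩ := hconst.exists
  exact hc hc0

variable [NormedField 𝕜] [NormedSpace 𝕜 E] {A B : Set α}

theorem eq_zero_of_smul_indicatorConstLp_add_eq_zero (hA : MeasurableSet A)
    (hB : MeasurableSet B) (hμA : μ A ≠ ∞) (hμB : μ B ≠ ∞) (hAB : Disjoint A B) (hA0 : μ A ≠ 0)
    {c : E} (hc : c ≠ 0) {a b : 𝕜}
    (h : a • indicatorConstLp p hA hμA c + b • indicatorConstLp p hB hμB c = 0) : a = 0 := by
  have hae : ∀ᵐ x ∂μ, a • A.indicator (fun _ ↦ c) x + b • B.indicator (fun _ ↦ c) x = 0 := by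
    filter_upwards [eq_zero_iff_ae_eq_zero.mp h,
      coeFn_add (a • indicatorConstLp p hA hμA c) (b • indicatorConstLp p hB hμB c),
      coeFn_smul a (indicatorConstLp p hA hμA c), coeFn_smul b (indicatorConstLp p hB hμB c),
      indicatorConstLp_coeFn (p := p) (hs := hA) (hμs := hμA) (c := c),
      indicatorConstLp_coeFn (p := p) (hs := hB) (hμs := hμB) (c := c)]
      with x h0 hadd hsa hsb hiA hiB
    rwa [hadd, Pi.add_apply, hsa, hsb, Pi.smul_apply, Pi.smul_apply, hiA, hiB] at h0
  have := ae_restrict_neBot.mpr hA0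
  obtain ⟨x, hxA, hx⟩ := ((ae_restrict_mem hA).and (ae_restrict_of_ae hae)).exists
  rw [indicator_of_mem hxA, indicator_of_notMem (hAB.notMem_of_mem_left hxA)] at hx
  simpa [hc] using hx

theorem one_lt_rank_of_disjoint [Nontrivial E] (hA : MeasurableSet A) (hB : MeasurableSet B)
    (hμA : μ A ≠ ∞) (hμB : μ B ≠ ∞) (hAB : Disjoint A B) (hA0 : μ A ≠ 0)
    (hB0 : μ B ≠ 0) : 1 < Module.rank 𝕜 (Lp E p μ) := by
  obtain ⟨c, hc⟩ := exists_ne (0 : E)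
  have hli : LinearIndependent 𝕜 ![indicatorConstLp p hA hμA c, indicatorConstLp p hB hμB c] :=
    LinearIndependent.pair_iff.mpr fun a b h ↦
      ⟨eq_zero_of_smul_indicatorConstLp_add_eq_zero hA hB hμA hμB hAB hA0 hc h,
        eq_zero_of_smul_indicatorConstLp_add_eq_zero hB hA hμB hμA hAB.symm hB0 hc
          ((add_comm _ _).trans h)⟩
  exact Cardinal.one_lt_two.trans_le (by simpa using hli.cardinal_lift_le_rank)

end MeasureTheory.Lp

instance : IsFiniteMeasure μ01 := by unfold μ01; infer_instance

theorem μ01_Ico_ne_zero {a b : ℝ} (ha : 0 ≤ a) (hab : a < b) (hb : b ≤ 1) :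
    μ01 (Ico a b) ≠ 0 := by
  rw [μ01, Measure.restrict_eq_self _ (Ico_subset_Icc_self.trans (Icc_subset_Icc ha hb))]
  simpa using hab

theorem one_lt_rank_Lp_μ01 (p : ℝ≥0∞) : 1 < Module.rank ℂ (Lp ℂ p μ01) :=
  Lp.one_lt_rank_of_disjoint measurableSet_Ico measurableSet_Ico (measure_ne_top _ _)
    (measure_ne_top _ _) (Ico_disjoint_Ico_same (a := 0) (b := 1 / 2) (c := 1))
    (μ01_Ico_ne_zero le_rfl (by norm_num) (by norm_num))
    (μ01_Ico_ne_zero (by norm_num) (by norm_num) le_rfl)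

theorem IsWTOp.ae_restrict_eq_zero {p : ℝ≥0∞} [Fact (1 ≤ p)] {φ : ℝ → ℂ} {α : ℝ}
    {T : Lp ℂ p μ01 →L[ℂ] Lp ℂ p μ01} (hT : IsWTOp p φ α T) (hφ : AEStronglyMeasurable φ μ01)
    (f : Lp ℂ p μ01) : ∀ᵐ x ∂μ01.restrict {x | φ x = 0}, T f x = 0 := by
  filter_upwards [ae_restrict_of_ae (hT f),
    ae_restrict_mem₀ (hφ.nullMeasurableSet_eq_fun aestronglyMeasurable_const)] with x hx hx0
  rw [hx, hx0, zero_mul]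

theorem weighted_translation_not_supercyclic_of_zero_set_general (p : ℝ≥0∞) [Fact (1 ≤ p)]
    (φ : ℝ → ℂ) (hφ : MemLp φ ⊤ μ01) (hzero : 0 < μ01 {x | φ x = 0})
    (α : ℝ)
    (T : Lp ℂ p μ01 →L[ℂ] Lp ℂ p μ01) (hT : IsWTOp p φ α T) :
    ¬ ∃ f : Lp ℂ p μ01,
      Dense {g : Lp ℂ p μ01 | ∃ (c : ℂ) (n : ℕ), c • (T ^ n) f = g} :=
  T.not_supercyclic_of_not_denseRange (one_lt_rank_Lp_μ01 p)
    (Lp.not_denseRange_of_ae_restrict_eq_zero hzero.ne' (hT.ae_restrict_eq_zero hφ.1))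

/-- If `φ ∈ L^∞([0,1])` is such that `{φ = 0}` has positive Lebesgue measure,
then for every `α ∈ [0,1]` and `1 < p < ∞` the weighted translation operator `T_{φ,α}`
on `L^p([0,1])` is not supercyclic. -/
theorem weighted_translation_not_supercyclic_of_zero_set (p : ℝ≥0∞) [Fact (1 ≤ p)]
    (hp : 1 < p) (hp' : p ≠ ∞)
    (φ : ℝ → ℂ) (hφ : MemLp φ ⊤ μ01) (hzero : 0 < μ01 {x | φ x = 0})
    (α : ℝ) (hα : α ∈ Set.Icc (0 : ℝ) 1)
    (T : Lp ℂ p μ01 →L[ℂ] Lp ℂ p μ01) (hT : IsWTOp p φ α T) :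
    ¬ ∃ f : Lp ℂ p μ01,
      Dense {g : Lp ℂ p μ01 | ∃ (c : ℂ) (n : ℕ), c • (T ^ n) f = g} :=
  weighted_translation_not_supercyclic_of_zero_set_general p φ hφ hzero α T hT
end

section
/- Let X be a separable infinite-dimensional complex Banach space and let T be a bounded linear operator on X whose adjoint T^* has empty point spectrum. Then the following are equivalent: (i) T is cyclic; (ii) for every pair (U, V) of non-empty open subsets of X, there exists a complex polynomial P such that P(T)(U) ∩ V ≠ ∅. Moreover, in this case the set of cyclic vectors for T is a dense G_δ subset of X. -/
open Polynomial Set TopologicalSpace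

/-!
The vector `x` is cyclic iff its polynomial orbit `{P(T)x}` is dense. Since `T*` has no
eigenvalues, a functional annihilating the range of `T - c` must vanish, so every `T - c` has
dense range, and hence so does every `P(T)` with `P ≠ 0`, factored into linear factors over `ℂ`.
If `x` is cyclic, choose `Q(T)x ∈ U` with `Q(T)x ≠ 0`: then `Q ≠ 0`, and `Q(T)` maps the orbit
of `x` onto the orbit of `Q(T)x`, which is therefore dense and meets `V`. Conversely, for a
countable basis `(Vₖ)` the cyclic vectors are `⋂ₖ ⋃_P P(T)⁻¹(Vₖ)`; transitivity makes each of
these open sets dense, so by Baire they form a dense `G_δ`.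
-/

theorem LinearMap.denseRange_of_forall_dual_comp_eq_zero {𝕜 E F : Type*} [RCLike 𝕜]
    [AddCommGroup E] [Module 𝕜 E] [NormedAddCommGroup F] [NormedSpace 𝕜 F] (f : E →ₗ[𝕜] F)
    (h : ∀ g : StrongDual 𝕜 F, (g : F →ₗ[𝕜] 𝕜) ∘ₗ f = 0 → g = 0) : DenseRange f := by
  set K := (LinearMap.range f).topologicalClosure
  have : IsClosed (K : Set F) := (LinearMap.range f).isClosed_topologicalClosure
  refine dense_iff_closure_eq.2 (eq_univ_of_forall fun x => by_contra fun hx => ?_)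
  have hxK : K.mkQ x ≠ 0 := by
    rwa [Ne, Submodule.mkQ_apply, Submodule.Quotient.mk_eq_zero, ← SetLike.mem_coe,
      Submodule.topologicalClosure_coe, LinearMap.coe_range]
  obtain ⟨φ, hφ⟩ := SeparatingDual.exists_ne_zero (R := 𝕜) hxK
  have hφK : φ ∘L K.mkQL = 0 := h _ <| LinearMap.ext fun y => by
    simp [(Submodule.Quotient.mk_eq_zero K).2
      ((LinearMap.range f).le_topologicalClosure (LinearMap.mem_range_self f y))]
  exact hφ (by simpa using congrArg (· x) hφK)

section Polynomial

variable {𝕜 E : Type*} [NontriviallyNormedField 𝕜] [NormedAddCommGroup E] [NormedSpace 𝕜 E]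
  (T : E →L[𝕜] E)

theorem ContinuousLinearMap.span_range_pow_apply_eq_range_aeval (x : E) :
    (Submodule.span 𝕜 (range fun n : ℕ => (T ^ n) x) : Set E) =
      range fun P : 𝕜[X] => (aeval T P : E →L[𝕜] E) x := by
  let f : 𝕜[X] →ₗ[𝕜] E := (ContinuousLinearMap.apply 𝕜 E x).toLinearMap ∘ₗ (aeval T).toLinearMap
  have hf : f ∘ basisMonomials 𝕜 = fun n => (T ^ n) x := by
    ext n
    simp [f, coe_basisMonomials]
  rw [← hf, range_comp, ← Submodule.map_span, (basisMonomials 𝕜).span_eq, Submodule.map_top,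
    LinearMap.coe_range]
  rfl

def denseRangeAevalSubmonoid : Submonoid 𝕜[X] where
  carrier := {P | DenseRange (aeval T P : E →L[𝕜] E)}
  one_mem' := by simpa using denseRange_id
  mul_mem' {P Q} hP hQ := by
    simp only [mem_ofPred_eq, map_mul]
    exact hP.comp hQ (aeval T P).continuous

theorem mem_denseRangeAevalSubmonoid_of_isUnit {P : 𝕜[X]} (hP : IsUnit P) :
    P ∈ denseRangeAevalSubmonoid T := by
  obtain ⟨Q, hQ⟩ := (hP.map (aeval T)).exists_right_inv
  exact Function.Surjective.denseRange fun y => ⟨Q y, congrArg (· y) hQ⟩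

theorem Dense.exists_aeval_image_inter_nonempty
    (hdr : ∀ P : 𝕜[X], P ≠ 0 → DenseRange (aeval T P : E →L[𝕜] E)) {x : E}
    (hx : Dense (range fun P : 𝕜[X] => (aeval T P : E →L[𝕜] E) x)) {U V : Set E}
    (hU : IsOpen U) (hV : IsOpen V) (hUne : U.Nonempty) (hVne : V.Nonempty) :
    ∃ P : 𝕜[X], ((aeval T P : E →L[𝕜] E) '' U ∩ V).Nonempty := by
  rcases subsingleton_or_nontrivial E with hE | hE
  · obtain ⟨u, hu⟩ := hUne
    obtain ⟨v, hv⟩ := hVne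
    exact ⟨0, v, ⟨u, hu, Subsingleton.elim _ _⟩, hv⟩
  have := Module.punctured_nhds_neBot 𝕜 E 0
  obtain ⟨_, hyU, ⟨Q, rfl⟩, hy0⟩ := (hx.sdiff_singleton 0).inter_open_nonempty U hU hUne
  have hQ : Q ≠ 0 := by
    rintro rfl
    simp at hy0
  have hQx : Dense (range fun P : 𝕜[X] => (aeval T P : E →L[𝕜] E) (aeval T Q x)) := by
    convert (hdr Q hQ).dense_image (aeval T Q).continuous hx using 1
    rw [← range_comp]
    exact congrArg range (funext fun P => congrArg (· x) ((Commute.all P Q).map (aeval T)).eq)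
  obtain ⟨_, hPV, P, rfl⟩ := hQx.inter_open_nonempty V hV hVne
  exact ⟨P, _, mem_image_of_mem _ hyU, hPV⟩

end Polynomial

theorem denseRange_aeval_X_sub_C {𝕜 E : Type*} [RCLike 𝕜] [NormedAddCommGroup E]
    [NormedSpace 𝕜 E] {T : E →L[𝕜] E}
    (hpt : ∀ (c : 𝕜) (g : StrongDual 𝕜 E), (∀ x, g (T x) = c * g x) → g = 0) (c : 𝕜) :
    DenseRange (aeval T (X - C c) : E →L[𝕜] E) := by
  refine LinearMap.denseRange_of_forall_dual_comp_eq_zero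
    ((aeval T (X - C c) : E →L[𝕜] E) : E →ₗ[𝕜] E) fun g hg => hpt c g fun x => ?_
  simpa [sub_eq_zero, Algebra.algebraMap_eq_smul_one] using LinearMap.congr_fun hg x

theorem denseRange_aeval_of_ne_zero {E : Type*} [NormedAddCommGroup E] [NormedSpace ℂ E]
    {T : E →L[ℂ] E} (hpt : ∀ (c : ℂ) (g : StrongDual ℂ E), (∀ x, g (T x) = c * g x) → g = 0)
    {P : ℂ[X]} (hP : P ≠ 0) : DenseRange (aeval T P : E →L[ℂ] E) := by
  show P ∈ denseRangeAevalSubmonoid T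
  rw [← C_leadingCoeff_mul_prod_multiset_X_sub_C (p := P) IsAlgClosed.card_roots_eq_natDegree]
  have hC : IsUnit (C P.leadingCoeff) := isUnit_C.2 (leadingCoeff_ne_zero.2 hP).isUnit
  refine mul_mem (mem_denseRangeAevalSubmonoid_of_isUnit T hC) (multiset_prod_mem _ fun Q hQ => ?_)
  obtain ⟨c, -, rfl⟩ := Multiset.mem_map.1 hQ
  exact denseRange_aeval_X_sub_C hpt c

section Universality

variable {ι X Y : Type*} [TopologicalSpace Y] [SecondCountableTopology Y]

theorem setOf_dense_range_apply_eq_biInter (f : ι → X → Y) :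
    {x | Dense (range fun i => f i x)} = ⋂ V ∈ countableBasis Y, ⋃ i, f i ⁻¹' V := by
  ext x
  simp only [mem_ofPred_eq, mem_iInter, mem_iUnion, mem_preimage,
    (isBasis_countableBasis Y).dense_iff]
  refine forall₂_congr fun V hV => ?_
  rw [forall_prop_of_true (nonempty_of_mem_countableBasis hV), inter_comm]
  simp only [Set.Nonempty, mem_inter_iff, exists_range_iff]

theorem isGδ_setOf_dense_range_apply [TopologicalSpace X] {f : ι → X → Y}
    (hf : ∀ i, Continuous (f i)) : IsGδ {x | Dense (range fun i => f i x)} := by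
  rw [setOf_dense_range_apply_eq_biInter]
  exact .biInter_of_isOpen (countable_countableBasis Y) fun V hV =>
    isOpen_iUnion fun i => ((isBasis_countableBasis Y).isOpen hV).preimage (hf i)

theorem dense_setOf_dense_range_apply [TopologicalSpace X] [BaireSpace X] {f : ι → X → Y}
    (hf : ∀ i, Continuous (f i))
    (htr : ∀ U V, IsOpen U → IsOpen V → U.Nonempty → V.Nonempty → ∃ i, (f i '' U ∩ V).Nonempty) :
    Dense {x | Dense (range fun i => f i x)} := by
  have hB := isBasis_countableBasis Y
  rw [setOf_dense_range_apply_eq_biInter]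
  refine dense_biInter_of_isOpen (fun V hV => isOpen_iUnion fun i => (hB.isOpen hV).preimage (hf i))
    (countable_countableBasis Y) fun V hV => dense_iff_inter_open.2 fun U hU hUne => ?_
  obtain ⟨i, _, ⟨x, hxU, rfl⟩, hxV⟩ :=
    htr U V hU (hB.isOpen hV) hUne (nonempty_of_mem_countableBasis hV)
  exact ⟨x, hxU, mem_iUnion.2 ⟨i, hxV⟩⟩

end Universality

theorem cyclic_iff_transitive_of_adjoint_no_eigenvalue_general
    {X : Type*} [NormedAddCommGroup X] [NormedSpace ℂ X] [CompleteSpace X]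
    [TopologicalSpace.SeparableSpace X]
    (T : X →L[ℂ] X)
    (hpt : ∀ (c : ℂ) (g : StrongDual ℂ X), (∀ x, g (T x) = c * g x) → g = 0) :
    ((∃ x : X, Dense (Submodule.span ℂ (Set.range fun n : ℕ => (T ^ n) x) : Set X)) ↔
      (∀ U V : Set X, IsOpen U → IsOpen V → U.Nonempty → V.Nonempty →
        ∃ P : ℂ[X], ((aeval T P : X →L[ℂ] X) '' U ∩ V).Nonempty)) ∧
    ((∃ x : X, Dense (Submodule.span ℂ (Set.range fun n : ℕ => (T ^ n) x) : Set X)) →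
      IsGδ {x : X | Dense (Submodule.span ℂ (Set.range fun n : ℕ => (T ^ n) x) : Set X)} ∧
      Dense {x : X | Dense (Submodule.span ℂ (Set.range fun n : ℕ => (T ^ n) x) : Set X)}) := by
  have := UniformSpace.secondCountable_of_separable X
  simp only [ContinuousLinearMap.span_range_pow_apply_eq_range_aeval]
  have hcont : ∀ P : ℂ[X], Continuous (aeval T P : X →L[ℂ] X) := fun P => (aeval T P).continuous
  have htr : (∃ x : X, Dense (range fun P : ℂ[X] => (aeval T P : X →L[ℂ] X) x)) →
      ∀ U V : Set X, IsOpen U → IsOpen V → U.Nonempty → V.Nonempty →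
        ∃ P : ℂ[X], ((aeval T P : X →L[ℂ] X) '' U ∩ V).Nonempty :=
    fun ⟨_, hx⟩ _ _ =>
      hx.exists_aeval_image_inter_nonempty T fun _ => denseRange_aeval_of_ne_zero hpt
  exact ⟨⟨htr, fun h => (dense_setOf_dense_range_apply hcont h).nonempty⟩,
    fun h => ⟨isGδ_setOf_dense_range_apply hcont, dense_setOf_dense_range_apply hcont (htr h)⟩⟩

/-- Let `T` be a bounded operator on a separable infinite-dimensional complex
Banach space `X` whose adjoint has empty point spectrum. Then `T` is cyclic iff for every
pair `(U, V)` of non-empty open subsets of `X` there is a polynomial `P` with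
`P(T)(U) ∩ V ≠ ∅`; and in this case the set of cyclic vectors is a dense `G_δ` in `X`. -/
theorem cyclic_iff_transitive_of_adjoint_no_eigenvalue
    {X : Type*} [NormedAddCommGroup X] [NormedSpace ℂ X] [CompleteSpace X]
    [TopologicalSpace.SeparableSpace X]
    (hdim : ¬ FiniteDimensional ℂ X) (T : X →L[ℂ] X)
    (hpt : ∀ (c : ℂ) (g : StrongDual ℂ X), (∀ x, g (T x) = c * g x) → g = 0) :
    ((∃ x : X, Dense (Submodule.span ℂ (Set.range fun n : ℕ => (T ^ n) x) : Set X)) ↔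
      (∀ U V : Set X, IsOpen U → IsOpen V → U.Nonempty → V.Nonempty →
        ∃ P : ℂ[X], ((aeval T P : X →L[ℂ] X) '' U ∩ V).Nonempty)) ∧
    ((∃ x : X, Dense (Submodule.span ℂ (Set.range fun n : ℕ => (T ^ n) x) : Set X)) →
      IsGδ {x : X | Dense (Submodule.span ℂ (Set.range fun n : ℕ => (T ^ n) x) : Set X)} ∧
      Dense {x : X | Dense (Submodule.span ℂ (Set.range fun n : ℕ => (T ^ n) x) : Set X)}) :=
  cyclic_iff_transitive_of_adjoint_no_eigenvalue_general T hpt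
end

section
/- Let 1 < p < ∞ and let f ∈ L^p([0,1]) be cyclic for the Bishop operator T_α for every rational α ∈ (0,1). Then there exists a function ψ_f : ℕ → ℝ₊ with the following property: if α ∈ [0,1] is irrational with continued fraction convergents (p_n/q_n)_{n≥0}, and if for every n ≥ 0 there exists n₀ ≥ n such that q_{n₀+1} > ψ_f(q_{n₀}), then f is cyclic for T_α. -/
/-!
Fix a countable basis `(U j)` of `L^p`: the span of the orbit of `f` under `T_α` is dense iff it
meets every `U j`. The set `G j` of those `α` for which it meets `U j` is open, since
`α ↦ T_α^n f` is continuous (translation is strongly continuous on `L^p` of the circle), and by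
hypothesis it contains every rational `a ∈ (0,1)`, hence a ball of some radius `δ a j` around it.
Take `ψ Q := ∑_{i, j ≤ Q} (δ (i / Q) j)⁻¹`. If `q_{n+1} > ψ(q_n)` with `q_n ≥ j` large, the
convergent `p_n / q_n` lies in `(0,1)` and `|α - p_n / q_n| ≤ 1 / q_{n+1} < δ (p_n / q_n) j`,
so `α ∈ G j`.
-/

open MeasureTheory Set Filter Topology Polynomial
open scoped ENNReal NNReal

theorem TopologicalSpace.exists_seq_nonempty_basis (E : Type*) [TopologicalSpace E]
    [SecondCountableTopology E] [Nonempty E] :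
    ∃ U : ℕ → Set E, (∀ j, (U j).Nonempty) ∧ IsTopologicalBasis (range U) := by
  obtain ⟨b, hbc, hb0, hb⟩ := exists_countable_basis E
  have hne : b.Nonempty := by
    obtain ⟨o, ho, -⟩ :=
      hb.exists_subset_of_mem_open (mem_univ (Classical.arbitrary E)) isOpen_univ
    exact ⟨o, ho⟩
  obtain ⟨U, rfl⟩ := hbc.exists_eq_range hne
  exact ⟨U, fun j => nonempty_iff_ne_empty.2 fun h => hb0 (h ▸ mem_range_self j), hb⟩

theorem isOpen_setOf_inter_span_range_nonempty {𝕜 X E ι : Type*} [Semiring 𝕜]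
    [TopologicalSpace X] [AddCommMonoid E] [TopologicalSpace E] [ContinuousAdd E] [Module 𝕜 E]
    [ContinuousConstSMul 𝕜 E] {v : X → ι → E} (hv : ∀ i, Continuous fun x => v x i)
    {U : Set E} (hU : IsOpen U) :
    IsOpen {x | (U ∩ Submodule.span 𝕜 (range (v x))).Nonempty} := by
  refine isOpen_iff_mem_nhds.2 fun a ⟨w, hwU, hw⟩ => ?_
  obtain ⟨c, rfl⟩ := Finsupp.mem_span_range_iff_exists_finsupp.1 hw
  have hcont : Continuous fun x => c.sum fun i t => t • v x i :=
    continuous_finsetSum _ fun i _ => (hv i).const_smul _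
  filter_upwards [hcont.continuousAt.preimage_mem_nhds (hU.mem_nhds hwU)] with x hx
  exact ⟨_, hx, Finsupp.mem_span_range_iff_exists_finsupp.2 ⟨c, rfl⟩⟩

namespace GenContFract

variable {K : Type*} [Field K] [LinearOrder K] [FloorRing K]

theorem exists_int_eq_contsAux_a (v : K) : ∀ n, ∃ z : ℤ, ((GenContFract.of v).contsAux n).a = z
  | 0 => ⟨1, by simp [contsAux]⟩
  | 1 => ⟨⌊v⌋, by simp [contsAux, of_h_eq_floor]⟩
  | n + 2 => by
    obtain ⟨z₀, h₀⟩ := exists_int_eq_contsAux_a v n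
    obtain ⟨z₁, h₁⟩ := exists_int_eq_contsAux_a v (n + 1)
    rcases hs : (GenContFract.of v).s.get? n with _ | gp
    · rw [contsAux_stable_step_of_terminated hs]
      exact ⟨z₁, h₁⟩
    · obtain ⟨ha, b, hb⟩ := of_partNum_eq_one_and_exists_int_partDen_eq hs
      refine ⟨b * z₁ + z₀, ?_⟩
      rw [contsAux_recurrence hs rfl rfl, ha, hb, h₀, h₁]
      push_cast
      ring

theorem exists_int_eq_nums (v : K) (n : ℕ) : ∃ z : ℤ, (GenContFract.of v).nums n = z := by
  rw [num_eq_conts_a, nth_cont_eq_succ_nth_contAux]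
  exact exists_int_eq_contsAux_a v (n + 1)

end GenContFract

namespace Irrational

open GenContFract

variable {α : ℝ}

theorem genContFract_not_terminatedAt (hα : Irrational α) (n : ℕ) :
    ¬(GenContFract.of α).TerminatedAt n := fun h => hα <| by
  obtain ⟨q, rfl⟩ := (terminates_iff_rat α).1 ⟨n, h⟩
  exact ⟨q, rfl⟩

theorem one_le_genContFract_dens (hα : Irrational α) (n : ℕ) :
    1 ≤ (GenContFract.of α).dens n :=
  (Nat.one_le_cast.2 (Nat.fib_pos.2 n.succ_pos)).trans
    (succ_nth_fib_le_of_nth_den (Or.inr (hα.genContFract_not_terminatedAt _)))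

theorem tendsto_genContFract_dens (hα : Irrational α) :
    Tendsto (fun n => (GenContFract.of α).dens n) atTop atTop := by
  rw [← tendsto_add_atTop_iff_nat 1]
  refine tendsto_atTop_mono
    (fun n => succ_nth_fib_le_of_nth_den (Or.inr (hα.genContFract_not_terminatedAt _))) ?_
  exact tendsto_natCast_atTop_atTop.comp Nat.fib_add_two_strictMono.tendsto_atTop

theorem exists_int_abs_sub_div_dens_le (hα : Irrational α) (n : ℕ) :
    ∃ z : ℤ, |α - z / (GenContFract.of α).dens n| ≤ ((GenContFract.of α).dens (n + 1))⁻¹ := by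
  obtain ⟨z, hz⟩ := exists_int_eq_nums α n
  refine ⟨z, ?_⟩
  rw [← hz, ← conv_eq_num_div_den]
  refine (abs_sub_convs_le (hα.genContFract_not_terminatedAt n)).trans ?_
  rw [one_div, mul_inv]
  exact mul_le_of_le_one_left (inv_nonneg.2 zero_le_of_den)
    (inv_le_one_of_one_le₀ (hα.one_le_genContFract_dens n))

theorem exists_nat_div_dens_mem_Ioo (hα : Irrational α) (h01 : α ∈ Ioo (0 : ℝ) 1) {n : ℕ}
    (hn : (min α (1 - α))⁻¹ < (GenContFract.of α).dens n) :
    ∃ i : ℕ, i / (GenContFract.of α).dens n ∈ Ioo (0 : ℝ) 1 ∧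
      |α - i / (GenContFract.of α).dens n| ≤ ((GenContFract.of α).dens (n + 1))⁻¹ := by
  have hρ : 0 < min α (1 - α) := lt_min h01.1 (sub_pos.2 h01.2)
  have hQ : 0 < (GenContFract.of α).dens n := (inv_pos.2 hρ).trans hn
  obtain ⟨z, hz⟩ := hα.exists_int_abs_sub_div_dens_le n
  have hclose : |α - z / (GenContFract.of α).dens n| < min α (1 - α) :=
    (hz.trans (inv_anti₀ hQ of_den_mono)).trans_lt (inv_lt_of_inv_lt₀ hρ hn)
  have hmem : z / (GenContFract.of α).dens n ∈ Ioo (0 : ℝ) 1 := by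
    have := abs_sub_lt_iff.1 hclose
    constructor <;> linarith [min_le_left α (1 - α), min_le_right α (1 - α)]
  lift z to ℕ using by exact_mod_cast ((div_pos_iff_of_pos_right hQ).1 hmem.1).le
  exact ⟨z, by exact_mod_cast hmem, by exact_mod_cast hz⟩

theorem mem_Ioo_of_mem_Icc (hα : Irrational α) (h : α ∈ Icc (0 : ℝ) 1) : α ∈ Ioo (0 : ℝ) 1 :=
  ⟨h.1.lt_of_ne (by simpa using (hα.ne_int 0).symm), h.2.lt_of_ne (by simpa using hα.ne_int 1)⟩

end Irrational

noncomputable def gapBound (δ : ℝ → ℕ → ℝ) (Q : ℕ) : ℝ :=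
  ∑ x ∈ Finset.range (Q + 1) ×ˢ Finset.range (Q + 1), (δ (x.1 / Q) x.2)⁻¹

theorem gapBound_nonneg {δ : ℝ → ℕ → ℝ} (hδ : ∀ a j, 0 < δ a j) (Q : ℕ) : 0 ≤ gapBound δ Q :=
  Finset.sum_nonneg fun _ _ => (inv_pos.2 (hδ _ _)).le

theorem inv_le_gapBound {δ : ℝ → ℕ → ℝ} (hδ : ∀ a j, 0 < δ a j) {i j Q : ℕ} (hi : i ≤ Q)
    (hj : j ≤ Q) : (δ (i / Q) j)⁻¹ ≤ gapBound δ Q :=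
  Finset.single_le_sum (f := fun x : ℕ × ℕ => (δ (x.1 / Q) x.2)⁻¹)
    (fun _ _ => (inv_pos.2 (hδ _ _)).le)
    (Finset.mem_product.2 ⟨Finset.mem_range_succ_iff.2 hi, Finset.mem_range_succ_iff.2 hj⟩ :
      (i, j) ∈ Finset.range (Q + 1) ×ˢ Finset.range (Q + 1))

theorem exists_gap_function_of_isOpen {G : ℕ → Set ℝ} (hG : ∀ j, IsOpen (G j))
    (hGrat : ∀ j, ∀ a : ℚ, (a : ℝ) ∈ Ioo (0 : ℝ) 1 → (a : ℝ) ∈ G j) :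
    ∃ ψ : ℕ → ℝ, (∀ n, 0 ≤ ψ n) ∧
      ∀ α : ℝ, α ∈ Icc (0 : ℝ) 1 → Irrational α →
        ∀ q : ℕ → ℕ, (∀ n, (q n : ℝ) = (GenContFract.of α).dens n) →
          (∀ n : ℕ, ∃ n₀, n ≤ n₀ ∧ (q (n₀ + 1) : ℝ) > ψ (q n₀)) → ∀ j, α ∈ G j := by
  have hball (a : ℝ) (j : ℕ) : ∃ δ > 0, a ∈ G j → Metric.ball a δ ⊆ G j := by
    by_cases ha : a ∈ G j
    · obtain ⟨δ, hδ, hsub⟩ := Metric.isOpen_iff.1 (hG j) a ha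
      exact ⟨δ, hδ, fun _ => hsub⟩
    · exact ⟨1, one_pos, fun h => absurd h ha⟩
  choose δ hδ hδG using hball
  refine ⟨gapBound δ, gapBound_nonneg hδ, fun α hα01 hα q hq hgap j => ?_⟩
  have hlarge : ∀ᶠ n in atTop, (j : ℝ) ≤ q n ∧ (min α (1 - α))⁻¹ < q n := by
    simp only [hq]
    exact (hα.tendsto_genContFract_dens.eventually_ge_atTop _).and
      (hα.tendsto_genContFract_dens.eventually_gt_atTop _)
  obtain ⟨N, hN⟩ := hlarge.exists_forall_of_atTop
  obtain ⟨n, hNn, hψ⟩ := hgap N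
  obtain ⟨hjn, hρn⟩ := hN n hNn
  rw [hq] at hρn
  obtain ⟨i, hi01, hiα⟩ := hα.exists_nat_div_dens_mem_Ioo (hα.mem_Ioo_of_mem_Icc hα01) hρn
  simp only [← hq] at hi01 hiα
  have hQ : (1 : ℝ) ≤ q n := hq n ▸ hα.one_le_genContFract_dens n
  have hin : i ≤ q n := by exact_mod_cast ((div_lt_one (by linarith)).1 hi01.2).le
  have hδα : (q (n + 1) : ℝ)⁻¹ < δ (i / q n) j :=
    inv_lt_of_inv_lt₀ (hδ _ _) ((inv_le_gapBound hδ hin (by exact_mod_cast hjn)).trans_lt hψ)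
  have hmem : (i / q n : ℝ) ∈ G j := by
    simpa using hGrat j ((i : ℚ) / q n) (by simpa using hi01)
  exact hδG _ j hmem (by rw [Metric.mem_ball, Real.dist_eq]; exact hiα.trans_lt hδα)

instance : μ01.InnerRegularCompactLTTop :=
  inferInstanceAs (volume.restrict (Icc (0 : ℝ) 1)).InnerRegularCompactLTTop

instance : IsSeparable μ01 :=
  inferInstanceAs (IsSeparable (volume.restrict (Icc (0 : ℝ) 1)))

theorem volume_restrict_Ioc_eq_μ01 : volume.restrict (Ioc (0 : ℝ) 1) = μ01 :=
  Measure.restrict_congr_set Ioc_ae_eq_Icc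

noncomputable def unitAddCircleRep (y : AddCircle (1 : ℝ)) : ℝ :=
  AddCircle.equivIoc 1 0 y

theorem measurePreserving_unitAddCircleRep :
    MeasurePreserving unitAddCircleRep volume μ01 := by
  have h := (measurePreserving_subtype_coe (μa := volume) measurableSet_Ioc).comp
    (AddCircle.measurePreserving_equivIoc (T := 1) (a := 0))
  simp only [zero_add, volume_restrict_Ioc_eq_μ01] at h
  exact h

theorem unitAddCircleRep_coe_of_fract_ne_zero {x : ℝ} (hx : Int.fract x ≠ 0) :
    unitAddCircleRep x = Int.fract x := by
  rw [unitAddCircleRep, ← AddCircle.coe_fract, AddCircle.equivIoc_coe_of_mem]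
  exact ⟨(Int.fract_nonneg x).lt_of_ne' hx, by simpa using (Int.fract_lt_one x).le⟩

noncomputable def translateMod1 (α : ℝ) : C(ℝ, AddCircle (1 : ℝ)) :=
  ⟨fun x => ((x + α : ℝ) : AddCircle (1 : ℝ)), by fun_prop⟩

theorem measurePreserving_translateMod1 (α : ℝ) :
    MeasurePreserving (translateMod1 α) μ01 volume := by
  have h := (measurePreserving_add_right volume (α : AddCircle (1 : ℝ))).comp
    (AddCircle.measurePreserving_mk 1 0)
  rw [zero_add, volume_restrict_Ioc_eq_μ01] at h
  exact h

theorem continuous_translateMod1 : Continuous translateMod1 :=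
  ContinuousMap.continuous_of_continuous_uncurry _ <|
    (AddCircle.continuous_mk' 1).comp (continuous_snd.add continuous_fst)

theorem ae_unitAddCircleRep_translateMod1 (α : ℝ) :
    ∀ᵐ x ∂μ01, unitAddCircleRep (translateMod1 α x) = Int.fract (x + α) := by
  have hnull : ∀ᵐ x ∂μ01, x ∉ range fun z : ℤ => (z : ℝ) - α :=
    ae_restrict_of_ae ((countable_range _).ae_notMem volume)
  filter_upwards [hnull] with x hx
  refine unitAddCircleRep_coe_of_fract_ne_zero fun h => hx ?_
  obtain ⟨z, hz⟩ := Int.fract_eq_zero_iff.1 h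
  exact ⟨z, by linarith⟩

theorem memLp_top_ofReal_μ01 : MemLp (fun x : ℝ => (x : ℂ)) ∞ μ01 := by
  refine memLp_top_of_bound Complex.continuous_ofReal.aestronglyMeasurable 1 ?_
  filter_upwards [ae_restrict_mem measurableSet_Icc] with x hx
  rw [Complex.norm_real, Real.norm_eq_abs, abs_le]
  exact ⟨by linarith [hx.1], hx.2⟩

section Operators

variable (p : ℝ≥0∞) [Fact (1 ≤ p)]

-- Passing through the circle makes `α ↦ T_α` composition with a continuous family of maps,
-- which is what strong continuity (`Continuous.compMeasurePreservingLp`) requires.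
noncomputable def translationOp (α : ℝ) : Lp ℂ p μ01 →L[ℂ] Lp ℂ p μ01 :=
  (Lp.compMeasurePreservingₗᵢ ℂ (translateMod1 α)
      (measurePreserving_translateMod1 α)).toContinuousLinearMap.comp
    (Lp.compMeasurePreservingₗᵢ ℂ unitAddCircleRep
      measurePreserving_unitAddCircleRep).toContinuousLinearMap

theorem translationOp_ae_eq (α : ℝ) (g : Lp ℂ p μ01) :
    translationOp p α g =ᵐ[μ01] fun x => g (Int.fract (x + α)) := by
  have hcirc := (measurePreserving_translateMod1 α).quasiMeasurePreserving.ae_eq_comp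
    (Lp.coeFn_compMeasurePreserving g measurePreserving_unitAddCircleRep)
  filter_upwards [Lp.coeFn_compMeasurePreserving (Lp.compMeasurePreserving _
    measurePreserving_unitAddCircleRep g) (measurePreserving_translateMod1 α), hcirc,
    ae_unitAddCircleRep_translateMod1 α] with x h₁ h₂ h₃
  rw [← h₃]
  exact h₁.trans h₂

theorem continuous_translationOp_apply (hp : p ≠ ∞) {X : Type*} [TopologicalSpace X]
    {α : X → ℝ} {g : X → Lp ℂ p μ01} (hα : Continuous α) (hg : Continuous g) :
    Continuous fun x => translationOp p (α x) (g x) :=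
  Continuous.compMeasurePreservingLp
    ((Lp.compMeasurePreservingₗᵢ ℂ unitAddCircleRep
      measurePreserving_unitAddCircleRep).continuous.comp hg)
    (continuous_translateMod1.comp hα) (fun x => measurePreserving_translateMod1 (α x)) hp

noncomputable def weightedTranslationOp {φ : ℝ → ℂ} (hφ : MemLp φ ∞ μ01) (α : ℝ) :
    Lp ℂ p μ01 →L[ℂ] Lp ℂ p μ01 :=
  ((ContinuousLinearMap.mul ℂ ℂ).holderL μ01 ∞ p p hφ.toLp).comp (translationOp p α)

theorem isWTOp_weightedTranslationOp {φ : ℝ → ℂ} (hφ : MemLp φ ∞ μ01) (α : ℝ) :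
    IsWTOp p φ α (weightedTranslationOp p hφ α) := fun g => by
  filter_upwards [(ContinuousLinearMap.mul ℂ ℂ).coeFn_holder (r := p) hφ.toLp
    (translationOp p α g), hφ.coeFn_toLp, translationOp_ae_eq p α g] with x h₁ h₂ h₃
  simp only [weightedTranslationOp, ContinuousLinearMap.comp_apply,
    ContinuousLinearMap.holderL_apply_apply, h₁, h₂, h₃, ContinuousLinearMap.mul_apply']

theorem IsWTOp.eq_weightedTranslationOp {φ : ℝ → ℂ} (hφ : MemLp φ ∞ μ01) {α : ℝ}
    {T : Lp ℂ p μ01 →L[ℂ] Lp ℂ p μ01} (hT : IsWTOp p φ α T) :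
    T = weightedTranslationOp p hφ α :=
  ContinuousLinearMap.ext fun g => Lp.ext <| by
    filter_upwards [hT g, isWTOp_weightedTranslationOp p hφ α g] with x h₁ h₂
    rw [h₁, h₂]

theorem continuous_weightedTranslationOp_pow_apply (hp : p ≠ ∞) {φ : ℝ → ℂ}
    (hφ : MemLp φ ∞ μ01) (f : Lp ℂ p μ01) (n : ℕ) :
    Continuous fun α => (weightedTranslationOp p hφ α ^ n) f := by
  induction n with
  | zero => simpa using continuous_const
  | succ n ih =>
    simp only [pow_succ']
    exact ((ContinuousLinearMap.mul ℂ ℂ).holderL μ01 ∞ p p hφ.toLp).continuous.comp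
      (continuous_translationOp_apply p hp continuous_id ih)

end Operators

theorem cyclic_of_large_gaps_in_denominators_general (p : ℝ≥0∞) [Fact (1 ≤ p)]
    (hp' : p ≠ ∞) (f : Lp ℂ p μ01)
    (hf : ∀ a : ℚ, (a : ℝ) ∈ Set.Ioo (0 : ℝ) 1 →
      ∀ T : Lp ℂ p μ01 →L[ℂ] Lp ℂ p μ01, IsBishopOp p (a : ℝ) T →
        Dense (Submodule.span ℂ (Set.range fun n : ℕ => (T ^ n) f) : Set (Lp ℂ p μ01))) :
    ∃ ψ : ℕ → ℝ, (∀ n, 0 ≤ ψ n) ∧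
      ∀ α : ℝ, α ∈ Set.Icc (0 : ℝ) 1 → Irrational α →
        ∀ q : ℕ → ℕ, (∀ n, (q n : ℝ) = (GenContFract.of α).dens n) →
          (∀ n : ℕ, ∃ n₀, n ≤ n₀ ∧ (q (n₀ + 1) : ℝ) > ψ (q n₀)) →
          ∀ T : Lp ℂ p μ01 →L[ℂ] Lp ℂ p μ01, IsBishopOp p α T →
            Dense (Submodule.span ℂ (Set.range fun n : ℕ => (T ^ n) f) :
              Set (Lp ℂ p μ01)) := by
  have : Fact (p ≠ ∞) := ⟨hp'⟩
  obtain ⟨U, hUne, hU⟩ := TopologicalSpace.exists_seq_nonempty_basis (Lp ℂ p μ01)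
  have hdense (s : Set (Lp ℂ p μ01)) : Dense s ↔ ∀ j, (U j ∩ s).Nonempty := by
    simp [hU.dense_iff, hUne]
  let W := weightedTranslationOp p memLp_top_ofReal_μ01
  let G j := {α | (U j ∩ Submodule.span ℂ (range fun n : ℕ => (W α ^ n) f)).Nonempty}
  have hG j : IsOpen (G j) := isOpen_setOf_inter_span_range_nonempty
    (continuous_weightedTranslationOp_pow_apply p hp' memLp_top_ofReal_μ01 f) (hU.isOpen ⟨j, rfl⟩)
  have hGrat j (a : ℚ) (ha : (a : ℝ) ∈ Ioo (0 : ℝ) 1) : (a : ℝ) ∈ G j :=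
    (hdense _).1 (hf a ha _ (isWTOp_weightedTranslationOp p memLp_top_ofReal_μ01 a)) j
  obtain ⟨ψ, hψ, hψG⟩ := exists_gap_function_of_isOpen hG hGrat
  refine ⟨ψ, hψ, fun α hα hirr q hq hgap T hT => ?_⟩
  rw [IsWTOp.eq_weightedTranslationOp p memLp_top_ofReal_μ01 hT]
  exact (hdense _).2 (hψG α hα hirr q hq hgap)

/-- Let `f ∈ L^p([0,1])` be cyclic for the Bishop operator `T_α` for every
rational `α ∈ (0,1)`. Then there is a function `ψ_f : ℕ → ℝ₊` such that if `α ∈ [0,1]` is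
irrational with continued-fraction convergent denominators `(q_n)`, and for every `n` there
is some `n₀ ≥ n` with `q_{n₀+1} > ψ_f(q_{n₀})`, then `f` is cyclic for `T_α`. -/
theorem cyclic_of_large_gaps_in_denominators (p : ℝ≥0∞) [Fact (1 ≤ p)]
    (hp : 1 < p) (hp' : p ≠ ∞) (f : Lp ℂ p μ01)
    (hf : ∀ a : ℚ, (a : ℝ) ∈ Set.Ioo (0 : ℝ) 1 →
      ∀ T : Lp ℂ p μ01 →L[ℂ] Lp ℂ p μ01, IsBishopOp p (a : ℝ) T →
        Dense (Submodule.span ℂ (Set.range fun n : ℕ => (T ^ n) f) : Set (Lp ℂ p μ01))) :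
    ∃ ψ : ℕ → ℝ, (∀ n, 0 ≤ ψ n) ∧
      ∀ α : ℝ, α ∈ Set.Icc (0 : ℝ) 1 → Irrational α →
        ∀ q : ℕ → ℕ, (∀ n, (q n : ℝ) = (GenContFract.of α).dens n) →
          (∀ n : ℕ, ∃ n₀, n ≤ n₀ ∧ (q (n₀ + 1) : ℝ) > ψ (q n₀)) →
          ∀ T : Lp ℂ p μ01 →L[ℂ] Lp ℂ p μ01, IsBishopOp p α T →
            Dense (Submodule.span ℂ (Set.range fun n : ℕ => (T ^ n) f) :
              Set (Lp ℂ p μ01)) :=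
  cyclic_of_large_gaps_in_denominators_general p hp' f hf
end

section
/- Let φ ∈ L^∞([0,1]) be such that the Lebesgue measure of {x ∈ [0,1] : φ(x) = 0} is positive, let α ∈ [0,1] and let 1 < p < ∞. Then the weighted translation operator T_{φ,α} on L^p([0,1]) is not cyclic. -/
/-! On the zero set of `φ` every `T g` vanishes, so integrating over two disjoint pieces `A`, `B`
of that set with positive measure gives a continuous linear map `L : Lp → ℂ × ℂ` killing the range
of `T`. The orbit of `f` then lies in the closed subspace `L⁻¹ (ℂ ∙ L f)`, which cannot be
everything because `L 1_A` and `L 1_B` are linearly independent. -/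

open MeasureTheory Set Filter Topology Polynomial
open scoped ENNReal NNReal

lemma not_linearIndependent_pair_of_mem_span_singleton {K V : Type*} [Field K]
    [AddCommGroup V] [Module K V] {u w v : V} (hu : u ∈ K ∙ v) (hw : w ∈ K ∙ v) :
    ¬ LinearIndependent K ![u, w] := by
  intro huw
  obtain ⟨a, rfl⟩ := Submodule.mem_span_singleton.mp hu
  obtain ⟨b, rfl⟩ := Submodule.mem_span_singleton.mp hw
  obtain ⟨-, ha⟩ := LinearIndependent.pair_iff.mp huw b (-a) (by
    rw [smul_smul, smul_smul, ← add_smul, mul_comm, neg_mul, add_neg_cancel, zero_smul])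
  exact huw.ne_zero 0 (by simp [neg_eq_zero.mp ha])

section Orbit

variable {𝕜 E F : Type*} [NontriviallyNormedField 𝕜] [CompleteSpace 𝕜]
  [NormedAddCommGroup E] [NormedSpace 𝕜 E] [NormedAddCommGroup F] [NormedSpace 𝕜 F]

/-- The closed subspace `L⁻¹ (𝕜 ∙ L f)` contains the orbit of `f` but not both `u` and `w`. -/
theorem not_dense_span_orbit_of_comp_eq_zero (T : E →L[𝕜] E) (L : E →L[𝕜] F)
    (hLT : L ∘L T = 0) {u w : E} (huw : LinearIndependent 𝕜 ![L u, L w]) (f : E) :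
    ¬ Dense (Submodule.span 𝕜 (range fun n : ℕ => (T ^ n) f) : Set E) := by
  intro hdense
  set W : Submodule 𝕜 E := (𝕜 ∙ L f).comap (L : E →ₗ[𝕜] F)
  have hW : IsClosed (W : Set E) := (𝕜 ∙ L f).closed_of_finiteDimensional.preimage L.continuous
  have horbit : Submodule.span 𝕜 (range fun n : ℕ => (T ^ n) f) ≤ W := by
    rw [Submodule.span_le]
    rintro - ⟨_ | n, rfl⟩
    · exact Submodule.mem_span_singleton_self (L f)
    · change L ((T ^ (n + 1)) f) ∈ 𝕜 ∙ L f
      rw [pow_succ', mul_apply_eq_comp, ← ContinuousLinearMap.comp_apply, hLT]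
      exact zero_mem _
  have hall : ∀ x, L x ∈ 𝕜 ∙ L f := fun x =>
    closure_minimal horbit hW (hdense.closure_eq ▸ mem_univ x)
  exact not_linearIndependent_pair_of_mem_span_singleton (hall u) (hall w) huw

end Orbit

/-- `c ↦ ν (S ∩ Iic c)` is `1`-Lipschitz and runs from `0` to `ν S` on `[a, b]`, so by the
intermediate value theorem some `c` cuts `S` into halves of equal measure. -/
lemma exists_pos_measure_inter_Iic_and_Ioi {a b : ℝ} {S : Set ℝ}
    (hS : 0 < volume.restrict (Icc a b) S) :
    ∃ c, 0 < volume.restrict (Icc a b) (S ∩ Iic c) ∧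
      0 < volume.restrict (Icc a b) (S ∩ Ioi c) := by
  set ν := volume.restrict (Icc a b)
  set F : ℝ → ℝ := fun c => ν.real (S ∩ Iic c)
  have hab : a ≤ b := by
    by_contra! hba
    simp [ν, Icc_eq_empty_of_lt hba] at hS
  have hF : LipschitzWith 1 F := LipschitzWith.of_le_add fun x y =>
    calc F x ≤ F y + ν.real (Ioc y x) := by
          refine (measureReal_mono fun z (hz : z ∈ S ∩ Iic x) => ?_).trans
            (measureReal_union_le _ _)
          obtain ⟨hzS, hzx⟩ := hz
          exact (le_or_gt z y).imp (fun hzy => ⟨hzS, hzy⟩) fun hyz => ⟨hyz, hzx⟩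
      _ ≤ F y + volume.real (Ioc y x) := by
          gcongr
          exact ENNReal.toReal_mono measure_Ioc_lt_top.ne (Measure.restrict_apply_le _ _)
      _ ≤ F y + dist x y := by
          rw [Real.volume_real_Ioc, Real.dist_eq]
          gcongr
          exact max_le (le_abs_self _) (abs_nonneg _)
  have hFa : F a = 0 := by
    have : ν (Iic a) = 0 := by
      rw [Measure.restrict_apply measurableSet_Iic]
      exact measure_mono_null (fun z hz => hz.1.antisymm hz.2.1) (measure_singleton a)
    simp [F, Measure.real, measure_mono_null inter_subset_right this]
  have hFb : F b = ν.real S := by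
    refine congrArg ENNReal.toReal (measure_inter_conull ?_)
    rw [compl_Iic, Measure.restrict_apply measurableSet_Ioi]
    exact measure_mono_null (fun z hz => absurd hz.2.2 (not_le.2 hz.1)) measure_empty
  have hSpos : 0 < ν.real S := ENNReal.toReal_pos hS.ne' (measure_ne_top ν S)
  obtain ⟨c, -, hc⟩ : ν.real S / 2 ∈ F '' Icc a b :=
    intermediate_value_Icc hab hF.continuous.continuousOn
      ⟨by rw [hFa]; positivity, by rw [hFb]; linarith⟩
  have hcompl : ν.real (S ∩ Ioi c) = ν.real S - F c := by
    rw [← measureReal_inter_add_sdiff (s := S) measurableSet_Iic (μ := ν), sdiff_eq, compl_Iic]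
    ring
  refine ⟨c, (ENNReal.toReal_pos_iff.mp ?_).1, (ENNReal.toReal_pos_iff.mp ?_).1⟩
  · change 0 < F c
    linarith
  · change 0 < ν.real (S ∩ Ioi c)
    linarith

namespace MeasureTheory.Lp

section

variable {α 𝕜 E : Type*} [MeasurableSpace α] {μ : Measure α}
  {p : ℝ≥0∞} [Fact (1 ≤ p)] [NormedAddCommGroup E]

lemma integrable [IsFiniteMeasure μ] (g : Lp E p μ) : Integrable g μ :=
  (Lp.memLp g).integrable Fact.out

variable [NormedSpace ℝ E]

lemma enorm_setIntegral_le (s : Set α) (g : Lp E p μ) :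
    ‖(∫ x in s, g x ∂μ : E)‖ₑ ≤ μ univ ^ (1 - p.toReal⁻¹) * ‖g‖ₑ :=
  calc ‖(∫ x in s, g x ∂μ : E)‖ₑ ≤ ∫⁻ x in s, ‖g x‖ₑ ∂μ := enorm_integral_le_lintegral_enorm _
    _ ≤ eLpNorm g 1 μ :=
      (setLIntegral_le_lintegral _ _).trans_eq eLpNorm_one_eq_lintegral_enorm.symm
    _ ≤ eLpNorm g p μ * μ univ ^ (1 / (1 : ℝ≥0∞).toReal - 1 / p.toReal) :=
      eLpNorm_le_eLpNorm_mul_rpow_measure_univ Fact.out (Lp.aestronglyMeasurable g)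
    _ = μ univ ^ (1 - p.toReal⁻¹) * ‖g‖ₑ := by simp [enorm_def, mul_comm]

variable (𝕜) [NontriviallyNormedField 𝕜] [NormedSpace 𝕜 E] [SMulCommClass ℝ 𝕜 E]
  [IsFiniteMeasure μ]

noncomputable def setIntegralCLM (s : Set α) : Lp E p μ →L[𝕜] E :=
  LinearMap.mkContinuous
    { toFun := fun g => ∫ x in s, g x ∂μ
      map_add' := fun g h => by
        rw [integral_congr_ae (ae_restrict_of_ae (Lp.coeFn_add g h))]
        exact integral_add (integrable g).integrableOn (integrable h).integrableOn
      map_smul' := fun c g => by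
        rw [integral_congr_ae (ae_restrict_of_ae (Lp.coeFn_smul c g))]
        exact integral_smul c _ }
    (μ univ ^ (1 - p.toReal⁻¹)).toReal fun g => by
      have hexp : 0 ≤ 1 - p.toReal⁻¹ := sub_nonneg.2 <| by
        rcases eq_or_ne p ⊤ with rfl | hp
        · simp
        · exact inv_le_one_of_one_le₀ (ENNReal.toReal_one ▸ ENNReal.toReal_mono hp Fact.out)
      have hfin : μ univ ^ (1 - p.toReal⁻¹) * ‖g‖ₑ ≠ ⊤ :=
        ENNReal.mul_ne_top (ENNReal.rpow_ne_top_of_nonneg hexp (measure_ne_top μ univ))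
          enorm_ne_top
      rw [← toReal_enorm, ← toReal_enorm g, ← ENNReal.toReal_mul]
      exact ENNReal.toReal_mono hfin (enorm_setIntegral_le s g)

variable {𝕜}

@[simp] lemma setIntegralCLM_apply (s : Set α) (g : Lp E p μ) :
    setIntegralCLM 𝕜 s g = ∫ x in s, g x ∂μ := rfl

end

section Scalar

variable {α 𝕜 : Type*} [RCLike 𝕜] [MeasurableSpace α] {μ : Measure α} [IsFiniteMeasure μ]
  {p : ℝ≥0∞} [Fact (1 ≤ p)]

lemma linearIndependent_setIntegralCLM_prod_indicatorConstLp {A B : Set α}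
    (hA : MeasurableSet A) (hB : MeasurableSet B) (hAB : Disjoint A B)
    (hA₀ : μ A ≠ 0) (hB₀ : μ B ≠ 0) :
    LinearIndependent 𝕜
      ![(setIntegralCLM 𝕜 A).prod (setIntegralCLM 𝕜 B)
          (indicatorConstLp p hA (measure_ne_top μ A) (1 : 𝕜)),
        (setIntegralCLM 𝕜 A).prod (setIntegralCLM 𝕜 B)
          (indicatorConstLp p hB (measure_ne_top μ B) (1 : 𝕜))] := by
  have hA' : μ.real A ≠ 0 := (measureReal_ne_zero_iff).2 hA₀
  have hB' : μ.real B ≠ 0 := (measureReal_ne_zero_iff).2 hB₀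
  simp only [ContinuousLinearMap.prod_apply, setIntegralCLM_apply,
    setIntegral_indicatorConstLp hA, setIntegral_indicatorConstLp hB, inter_self,
    hAB.inter_eq, hAB.symm.inter_eq, measureReal_empty]
  rw [LinearIndependent.pair_iff]
  intro s t hst
  simp_all

end Scalar

end MeasureTheory.Lp

instance inst_s15 : IsFiniteMeasure μ01 := Real.isFiniteMeasure_restrict_Icc 0 1

lemma IsWTOp.setIntegral_eq_zero {p : ℝ≥0∞} [Fact (1 ≤ p)] {φ : ℝ → ℂ} {α : ℝ}
    {T : Lp ℂ p μ01 →L[ℂ] Lp ℂ p μ01} (hT : IsWTOp p φ α T) {s : Set ℝ}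
    (hs : s ⊆ {x | φ x = 0}) (g : Lp ℂ p μ01) : ∫ x in s, T g x ∂μ01 = 0 :=
  setIntegral_eq_zero_of_ae_eq_zero <| (hT g).mono fun x hx hxs => by
    rw [hx, show φ x = 0 from hs hxs, zero_mul]

theorem weighted_translation_not_cyclic_of_zero_set_general (p : ℝ≥0∞) [Fact (1 ≤ p)]
    (φ : ℝ → ℂ) (hφ : MemLp φ ⊤ μ01) (hzero : 0 < μ01 {x | φ x = 0})
    (α : ℝ)
    (T : Lp ℂ p μ01 →L[ℂ] Lp ℂ p μ01) (hT : IsWTOp p φ α T) :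
    ¬ ∃ f : Lp ℂ p μ01,
      Dense (Submodule.span ℂ (Set.range fun n : ℕ => (T ^ n) f) : Set (Lp ℂ p μ01)) := by
  rintro ⟨f, hf⟩
  obtain ⟨S, hSφ, hS, hSae⟩ := (hφ.aemeasurable.nullMeasurableSet_preimage
    (measurableSet_singleton 0)).exists_measurable_subset_ae_eq
  obtain ⟨c, hA, hB⟩ := exists_pos_measure_inter_Iic_and_Ioi
    (measure_congr hSae ▸ hzero : 0 < volume.restrict (Icc 0 1) S)
  set L : Lp ℂ p μ01 →L[ℂ] ℂ × ℂ :=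
    (Lp.setIntegralCLM ℂ (S ∩ Iic c)).prod (Lp.setIntegralCLM ℂ (S ∩ Ioi c))
  have hLT : L ∘L T = 0 := ContinuousLinearMap.ext fun g => by
    simp [L, hT.setIntegral_eq_zero (inter_subset_left.trans hSφ)]
  have hAB : Disjoint (S ∩ Iic c) (S ∩ Ioi c) :=
    (Iic_disjoint_Ioi le_rfl).mono inter_subset_right inter_subset_right
  exact not_dense_span_orbit_of_comp_eq_zero T L hLT
    (Lp.linearIndependent_setIntegralCLM_prod_indicatorConstLp (hS.inter measurableSet_Iic)
      (hS.inter measurableSet_Ioi) hAB hA.ne' hB.ne') f hf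

/-- If `φ ∈ L^∞([0,1])` is such that `{φ = 0}` has positive Lebesgue measure,
then for every `α ∈ [0,1]` and `1 < p < ∞` the weighted translation operator `T_{φ,α}`
on `L^p([0,1])` is not cyclic. -/
theorem weighted_translation_not_cyclic_of_zero_set (p : ℝ≥0∞) [Fact (1 ≤ p)]
    (hp : 1 < p) (hp' : p ≠ ∞)
    (φ : ℝ → ℂ) (hφ : MemLp φ ⊤ μ01) (hzero : 0 < μ01 {x | φ x = 0})
    (α : ℝ) (hα : α ∈ Set.Icc (0 : ℝ) 1)
    (T : Lp ℂ p μ01 →L[ℂ] Lp ℂ p μ01) (hT : IsWTOp p φ α T) :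
    ¬ ∃ f : Lp ℂ p μ01,
      Dense (Submodule.span ℂ (Set.range fun n : ℕ => (T ^ n) f) : Set (Lp ℂ p μ01)) :=
  weighted_translation_not_cyclic_of_zero_set_general p φ hφ hzero α T hT
end
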